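/- Let K be an algebraically closed field of characteristic 2 and let g ∈ K[x₁,x₂,x₃] be a homogeneous polynomial of even degree d = 2k with k ≥ 1. If the set 𝒞_g := {[x] ∈ ℙ²_K : ∂g/∂x₁(x) = ∂g/∂x₂(x) = ∂g/∂x₃(x) = 0} is finite, then |𝒞_g| ≤ (d−1)². -/

import Mathlib

open MvPolynomial

noncomputable section

/-- The critical locus of a homogeneous polynomial `g ∈ K[x₁,x₂,x₃]` in `ℙ²_K`: the points at
which all three partial derivatives of `g` vanish (tested on every representative vector). -/
def critLocus {K : Type*} [Field K] (g : MvPolynomial (Fin 3) K) :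
    Set (Projectivization K (Fin 3 → K)) :=
  {p | ∀ (v : Fin 3 → K) (hv : v ≠ 0), Projectivization.mk K v hv = p →
      ∀ i, eval v (pderiv i g) = 0}

namespace CritProof


variable {K : Type*} [Field K]

/-- degree of a `Fin 3 →₀ ℕ` as explicit sum -/
lemma deg3 (d : Fin 3 →₀ ℕ) : d.degree = d 0 + d 1 + d 2 := by
  have : d.degree = ∑ i : Fin 3, d i := by
    rw [Finsupp.degree]
    apply Finset.sum_subset (Finset.subset_univ _)
    intro x _ hx
    simpa using hx
  rw [this, Fin.sum_univ_three]

lemma isHom_iff {σ : Type*} {R : Type*} [CommSemiring R] (φ : MvPolynomial σ R) (n : ℕ) :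
    φ.IsHomogeneous n ↔ ∀ d ∈ φ.support, d.degree = n := by
  unfold MvPolynomial.IsHomogeneous MvPolynomial.IsWeightedHomogeneous
  rw [Finsupp.degree_eq_weight_one]
  constructor
  · intro h d hd; exact h (mem_support_iff.mp hd)
  · intro h d hd; exact h d (mem_support_iff.mpr hd)

/-- evaluation of a homogeneous polynomial at a scaled point -/
lemma eval_smul_of_isHom {n : ℕ} {φ : MvPolynomial (Fin 3) K} (hφ : φ.IsHomogeneous n)
    (c : K) (v : Fin 3 → K) : eval (c • v) φ = c ^ n * eval v φ := by
  rw [eval_eq', eval_eq', Finset.mul_sum]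
  apply Finset.sum_congr rfl
  intro d hd
  have hdeg : d 0 + d 1 + d 2 = n := by
    rw [← deg3]; exact (isHom_iff φ n).mp hφ d hd
  simp only [Pi.smul_apply, smul_eq_mul]
  rw [Fin.prod_univ_three, Fin.prod_univ_three]
  rw [mul_pow, mul_pow, mul_pow, ← hdeg]
  ring

lemma isHom_pderiv {n : ℕ} {φ : MvPolynomial (Fin 3) K} (hφ : φ.IsHomogeneous n) (i : Fin 3) :
    (pderiv i φ).IsHomogeneous (n - 1) := by
  conv_lhs => rw [φ.as_sum]
  rw [map_sum]
  apply MvPolynomial.IsHomogeneous.sum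
  intro d hd
  rw [pderiv_monomial]
  rcases Nat.eq_zero_or_pos (d i) with h0 | hpos
  · rw [h0]; norm_num; exact isHomogeneous_zero _ _ _
  · apply isHomogeneous_monomial
    have hdeg : d.degree = n := (isHom_iff φ n).mp hφ d hd
    have hle : ∀ j, (Finsupp.single i 1) j ≤ d j := by
      intro j
      rw [Finsupp.single_apply]
      split
      · next h => rw [← h]; exact hpos
      · exact Nat.zero_le _
    have hsum : (Finsupp.single i 1) 0 + (Finsupp.single i 1) 1 + (Finsupp.single i 1) 2 = 1 := by
      fin_cases i <;> simp [Finsupp.single_apply]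
    rw [deg3] at hdeg ⊢
    simp only [Finsupp.coe_tsub, Pi.sub_apply]
    have h0 := hle 0; have h1 := hle 1; have h2 := hle 2
    omega

/-- If `f` is homogeneous of degree `n`, nonzero, and `f * w` is homogeneous of degree `n + c`,
then `w` is homogeneous of degree `c`. -/
lemma isHom_of_mul_left {f w : MvPolynomial (Fin 3) K} {n c : ℕ}
    (hf : f.IsHomogeneous n) (hf0 : f ≠ 0) (hfw : (f * w).IsHomogeneous (n + c)) :
    w.IsHomogeneous c := by
  classical
  set N := w.totalDegree
  have hw : w = ∑ i ∈ Finset.range (N + 1), homogeneousComponent i w :=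
    (sum_homogeneousComponent w).symm
  have hcomp : ∀ i, i ≠ c → homogeneousComponent i w = 0 := by
    intro i hic
    by_cases hiN : i ≤ N
    · have hexp : f * w = ∑ j ∈ Finset.range (N + 1), f * homogeneousComponent j w := by
        conv_lhs => rw [hw]
        rw [Finset.mul_sum]
      have hmem : ∀ j, (f * homogeneousComponent j w) ∈ homogeneousSubmodule (Fin 3) K (n + j) :=
        fun j => (mem_homogeneousSubmodule _ _).mpr (hf.mul (homogeneousComponent_isHomogeneous j w))
      have h1 : homogeneousComponent (n + i) (f * w) = f * homogeneousComponent i w := by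
        rw [hexp, map_sum]
        rw [Finset.sum_eq_single i]
        · rw [homogeneousComponent_of_mem (hmem i), if_pos rfl]
        · intro j _ hj
          rw [homogeneousComponent_of_mem (hmem j), if_neg (by omega)]
        · intro h; exact absurd (Finset.mem_range.mpr (by omega)) h
      have h2 : homogeneousComponent (n + i) (f * w) = 0 := by
        rw [homogeneousComponent_of_mem ((mem_homogeneousSubmodule _ _).mpr hfw),
          if_neg (by omega)]
      have := h1.symm.trans h2
      exact (mul_eq_zero.mp this).resolve_left hf0
    · exact homogeneousComponent_eq_zero _ w (by omega)
  by_cases hcN : c ≤ N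
  · have hwc : w = homogeneousComponent c w := by
      conv_lhs => rw [hw]
      exact Finset.sum_eq_single_of_mem c (Finset.mem_range.mpr (by omega))
        (fun j _ hj => hcomp j hj)
    rw [hwc]; exact homogeneousComponent_isHomogeneous c w
  · have : w = 0 := by
      rw [hw]
      apply Finset.sum_eq_zero
      intro i hi
      exact hcomp i (by rw [Finset.mem_range] at hi; omega)
    rw [this]; exact isHomogeneous_zero _ _ _



lemma comp_ne_zero_imp_le_tD {p : MvPolynomial (Fin 3) K} {i : ℕ}
    (h : homogeneousComponent i p ≠ 0) : i ≤ p.totalDegree := by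
  by_contra hc
  exact h (homogeneousComponent_eq_zero _ p (by omega))

lemma comp_totalDegree_ne_zero {p : MvPolynomial (Fin 3) K} (hp : p ≠ 0) :
    homogeneousComponent p.totalDegree p ≠ 0 := by
  obtain ⟨d, hd, hdeq⟩ := Finset.exists_mem_eq_sup p.support
    (support_nonempty.mpr hp) (fun s => s.sum fun _ e => e)
  intro h
  have hc : coeff d (homogeneousComponent p.totalDegree p) = coeff d p := by
    rw [coeff_homogeneousComponent, if_pos]
    rw [Finsupp.degree]
    rw [totalDegree, hdeq]
    rfl
  rw [h] at hc
  exact (mem_support_iff.mp hd) (by simpa using hc.symm)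

/-- min degree over support -/
def bdeg (p : MvPolynomial (Fin 3) K) (hp : p ≠ 0) : ℕ :=
  (p.support.image Finsupp.degree).min'
    ((support_nonempty.mpr hp).image _)

lemma comp_bdeg_ne_zero {p : MvPolynomial (Fin 3) K} (hp : p ≠ 0) :
    homogeneousComponent (bdeg p hp) p ≠ 0 := by
  have hm := (p.support.image Finsupp.degree).min'_mem ((support_nonempty.mpr hp).image _)
  rw [Finset.mem_image] at hm
  obtain ⟨d, hd, hdeq⟩ := hm
  intro h
  have hdeq' : d.degree = bdeg p hp := hdeq
  have hc : coeff d (homogeneousComponent (bdeg p hp) p) = coeff d p := by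
    rw [coeff_homogeneousComponent, if_pos hdeq']
  rw [h] at hc
  exact (mem_support_iff.mp hd) (by simpa using hc.symm)

lemma bdeg_le_of_comp_ne_zero {p : MvPolynomial (Fin 3) K} (hp : p ≠ 0) {i : ℕ}
    (h : homogeneousComponent i p ≠ 0) : bdeg p hp ≤ i := by
  obtain ⟨d, hd⟩ := ne_zero_iff.mp h
  rw [coeff_homogeneousComponent] at hd
  by_cases hdi : d.degree = i
  · apply Finset.min'_le
    rw [Finset.mem_image]
    refine ⟨d, ?_, hdi⟩
    rw [mem_support_iff]
    intro hz; rw [if_pos hdi, hz] at hd; exact hd rfl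
  · rw [if_neg hdi] at hd; exact absurd rfl hd

lemma bdeg_le_deg {p : MvPolynomial (Fin 3) K} (hp : p ≠ 0) {d : Fin 3 →₀ ℕ}
    (hd : d ∈ p.support) : bdeg p hp ≤ d.degree ∧ d.degree ≤ p.totalDegree := by
  constructor
  · exact Finset.min'_le _ _ (Finset.mem_image_of_mem _ hd)
  · have := le_totalDegree hd
    rwa [show (d.sum fun _ e => e) = d.degree from rfl] at this

lemma comp_mul_extreme {p q : MvPolynomial (Fin 3) K} (a b : ℕ)
    (h : ∀ i j, homogeneousComponent i p ≠ 0 → homogeneousComponent j q ≠ 0 →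
      i + j = a + b → i = a ∧ j = b) :
    homogeneousComponent (a + b) (p * q)
      = homogeneousComponent a p * homogeneousComponent b q := by
  classical
  have hexp : p * q = ∑ ij ∈ Finset.range (p.totalDegree + 1) ×ˢ Finset.range (q.totalDegree + 1),
      homogeneousComponent ij.1 p * homogeneousComponent ij.2 q := by
    rw [Finset.sum_product]
    conv_lhs => rw [← sum_homogeneousComponent p, ← sum_homogeneousComponent q]
    rw [Finset.sum_mul]
    apply Finset.sum_congr rfl
    intro i _
    rw [Finset.mul_sum]
  rw [hexp, map_sum]
  have hterm : ∀ ij : ℕ × ℕ,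
      homogeneousComponent (a + b) (homogeneousComponent ij.1 p * homogeneousComponent ij.2 q)
      = if ij.1 + ij.2 = a + b then homogeneousComponent ij.1 p * homogeneousComponent ij.2 q
        else 0 := by
    intro ij
    have hmem : homogeneousComponent ij.1 p * homogeneousComponent ij.2 q
        ∈ homogeneousSubmodule (Fin 3) K (ij.1 + ij.2) :=
      (mem_homogeneousSubmodule _ _).mpr
        ((homogeneousComponent_isHomogeneous ij.1 p).mul (homogeneousComponent_isHomogeneous ij.2 q))
    rw [homogeneousComponent_of_mem hmem]
    by_cases hc : ij.1 + ij.2 = a + b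
    · rw [if_pos hc, if_pos hc.symm]
    · rw [if_neg hc, if_neg (fun hh => hc hh.symm)]
  calc (∑ ij ∈ Finset.range (p.totalDegree + 1) ×ˢ Finset.range (q.totalDegree + 1),
      homogeneousComponent (a + b) (homogeneousComponent ij.1 p * homogeneousComponent ij.2 q))
      = ∑ ij ∈ Finset.range (p.totalDegree + 1) ×ˢ Finset.range (q.totalDegree + 1),
        if ij.1 + ij.2 = a + b then homogeneousComponent ij.1 p * homogeneousComponent ij.2 q
        else 0 := Finset.sum_congr rfl (fun ij _ => hterm ij)
    _ = (if (a : ℕ) + b = a + b then homogeneousComponent a p * homogeneousComponent b q else 0) := by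
        apply Finset.sum_eq_single (a, b)
        · intro ij _ hij
          split
          · next heq =>
            by_cases h1 : homogeneousComponent ij.1 p = 0
            · rw [h1, zero_mul]
            by_cases h2 : homogeneousComponent ij.2 q = 0
            · rw [h2, mul_zero]
            obtain ⟨e1, e2⟩ := h ij.1 ij.2 h1 h2 heq
            exact absurd (Prod.ext e1 e2) hij
          · rfl
        · intro hnotmem
          rw [if_pos rfl]
          rw [Finset.mem_product] at hnotmem
          push_neg at hnotmem
          by_cases hmem : (a : ℕ) ∈ Finset.range (p.totalDegree + 1)
          · have := hnotmem hmem
            rw [Finset.mem_range] at this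
            rw [homogeneousComponent_eq_zero _ q (by omega), mul_zero]
          · rw [Finset.mem_range] at hmem
            rw [homogeneousComponent_eq_zero _ p (by omega), zero_mul]
    _ = homogeneousComponent a p * homogeneousComponent b q := if_pos rfl

/-- divisors of a nonzero homogeneous polynomial are homogeneous -/
lemma isHom_of_dvd {g u : MvPolynomial (Fin 3) K} {n : ℕ}
    (hg : g.IsHomogeneous n) (hg0 : g ≠ 0) (hdvd : u ∣ g) :
    u.IsHomogeneous u.totalDegree := by
  obtain ⟨v, hguv⟩ := hdvd
  have hu0 : u ≠ 0 := by rintro rfl; rw [zero_mul] at hguv; exact hg0 hguv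
  have hv0 : v ≠ 0 := by rintro rfl; rw [mul_zero] at hguv; exact hg0 hguv
  -- top equality
  have htop : homogeneousComponent (u.totalDegree + v.totalDegree) g
      = homogeneousComponent u.totalDegree u * homogeneousComponent v.totalDegree v := by
    rw [hguv]
    apply comp_mul_extreme
    intro i j hi hj hsum
    have h1 := comp_ne_zero_imp_le_tD hi
    have h2 := comp_ne_zero_imp_le_tD hj
    omega
  have htopne : homogeneousComponent (u.totalDegree + v.totalDegree) g ≠ 0 := by
    rw [htop]
    exact mul_ne_zero (comp_totalDegree_ne_zero hu0) (comp_totalDegree_ne_zero hv0)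
  have htopeq : u.totalDegree + v.totalDegree = n := by
    by_contra hne
    exact htopne (by
      rw [homogeneousComponent_of_mem ((mem_homogeneousSubmodule _ _).mpr hg), if_neg (by omega)])
  -- bottom equality
  have hbot : homogeneousComponent (bdeg u hu0 + bdeg v hv0) g
      = homogeneousComponent (bdeg u hu0) u * homogeneousComponent (bdeg v hv0) v := by
    rw [hguv]
    apply comp_mul_extreme
    intro i j hi hj hsum
    have h1 := bdeg_le_of_comp_ne_zero hu0 hi
    have h2 := bdeg_le_of_comp_ne_zero hv0 hj
    omega
  have hbotne : homogeneousComponent (bdeg u hu0 + bdeg v hv0) g ≠ 0 := by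
    rw [hbot]
    exact mul_ne_zero (comp_bdeg_ne_zero hu0) (comp_bdeg_ne_zero hv0)
  have hboteq : bdeg u hu0 + bdeg v hv0 = n := by
    by_contra hne
    exact hbotne (by
      rw [homogeneousComponent_of_mem ((mem_homogeneousSubmodule _ _).mpr hg), if_neg (by omega)])
  have hble : bdeg u hu0 ≤ u.totalDegree := bdeg_le_of_comp_ne_zero hu0 (comp_totalDegree_ne_zero hu0)
  have hble' : bdeg v hv0 ≤ v.totalDegree := bdeg_le_of_comp_ne_zero hv0 (comp_totalDegree_ne_zero hv0)
  have hbu : bdeg u hu0 = u.totalDegree := by omega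
  rw [isHom_iff]
  intro d hd
  have := bdeg_le_deg hu0 hd
  omega

lemma eq_C_of_totalDegree_zero {π : MvPolynomial (Fin 3) K} (h : π.totalDegree = 0) :
    π = C (coeff 0 π) := by
  have hsupp : ∀ m ∈ π.support, m = (0 : Fin 3 →₀ ℕ) := by
    intro m hm
    ext x
    exact (totalDegree_eq_zero_iff _ π).mp h m hm x
  rcases Finset.subset_singleton_iff.mp
      (fun m hm => Finset.mem_singleton.mpr (hsupp m hm)) with he | he
  · have : π = 0 := by rwa [← support_eq_empty]
    rw [this]; simp
  · conv_lhs => rw [π.as_sum, he]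
    rw [Finset.sum_singleton, monomial_zero']




def e2 (t : ℕ) : {d : Fin 3 →₀ ℕ // d.degree = t} ≃ Sym (Fin 3) t :=
  Equiv.subtypeEquiv (Finsupp.orderIsoMultiset (ι := Fin 3)).toEquiv (fun d => by
    have h0 : (Finsupp.orderIsoMultiset.toEquiv d : Multiset (Fin 3)) = Finsupp.toMultiset d := rfl
    rw [h0, Finsupp.card_toMultiset]
    simp [Finsupp.degree, Finsupp.sum]
    rfl)

instance (t : ℕ) : Fintype {d : Fin 3 →₀ ℕ // d.degree = t} :=
  Fintype.ofEquiv _ (e2 t).symm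

instance (t : ℕ) : Fintype ↑{d : Fin 3 →₀ ℕ | d.degree = t} :=
  Fintype.ofEquiv _ (e2 t).symm

lemma card_degSet (t : ℕ) : Fintype.card {d : Fin 3 →₀ ℕ // d.degree = t} = (t + 2).choose 2 := by
  rw [Fintype.card_congr (e2 t), Sym.card_sym_eq_choose, Fintype.card_fin]
  have h1 : 3 + t - 1 = t + 2 := by omega
  rw [h1]
  have h2 : t = t + 2 - 2 := rfl
  conv_lhs => rw [h2]
  exact Nat.choose_symm (by omega)

def eqR (t : ℕ) : ↥(homogeneousSubmodule (Fin 3) K t) ≃ₗ[K]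
    ({d : Fin 3 →₀ ℕ // d.degree = t} → K) :=
  ((LinearEquiv.ofEq _ _ (homogeneousSubmodule_eq_finsupp_supported (Fin 3) K t)).trans
    (AddMonoidAlgebra.supportedEquivFinsupp {d : Fin 3 →₀ ℕ | d.degree = t})).trans
    (Finsupp.linearEquivFunOnFinite K K _)

instance fd_R (t : ℕ) : FiniteDimensional K ↥(homogeneousSubmodule (Fin 3) K t) :=
  Module.Finite.equiv (eqR t).symm

lemma finrank_R (t : ℕ) :
    Module.finrank K ↥(homogeneousSubmodule (Fin 3) K t) = (t + 2).choose 2 := by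
  rw [LinearEquiv.finrank_eq (eqR (K := K) t), Module.finrank_fintype_fun_eq_card, card_degSet]

/-- the binomial arithmetic identity -/
lemma choose_arith (c m n : ℕ) :
    (c + m + n + 2).choose 2 + (c + 2).choose 2
      = (c + n + 2).choose 2 + (c + m + 2).choose 2 + m * n := by
  have key : ∀ x : ℕ, (x + 2).choose 2 * 2 = (x + 2) * (x + 1) := by
    intro x
    rw [Nat.choose_two_right, show x + 2 - 1 = x + 1 from rfl]
    apply Nat.div_mul_cancel
    have h2 := (Nat.even_mul_succ_self (x + 1)).two_dvd
    rwa [mul_comm (x + 1) (x + 1 + 1)] at h2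
  have h1 := key (c + m + n); have h2 := key c; have h3 := key (c + n); have h4 := key (c + m)
  apply Nat.eq_of_mul_eq_mul_right (show 0 < 2 by norm_num)
  rw [add_mul, add_mul, add_mul, h1, h2, h3, h4]
  ring

abbrev HS (K : Type*) [Field K] (t : ℕ) := homogeneousSubmodule (Fin 3) K t

lemma memHS {a b : ℕ} {x : MvPolynomial (Fin 3) K} (h : x.IsHomogeneous a) (hab : a = b) :
    x ∈ HS K b := (mem_homogeneousSubmodule _ _).mpr (hab ▸ h)

lemma exists_sep (p q : Projectivization K (Fin 3 → K)) (hne : q ≠ p) :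
    ∃ ℓ : MvPolynomial (Fin 3) K, ℓ.IsHomogeneous 1 ∧ eval q.rep ℓ = 0 ∧ eval p.rep ℓ ≠ 0 := by
  set vq := q.rep with hvq
  set vp := p.rep with hvp
  have hq0 : vq ≠ 0 := q.rep_nonzero
  have hp0 : vp ≠ 0 := p.rep_nonzero
  obtain ⟨j, hj⟩ : ∃ j, vq j ≠ 0 := Function.ne_iff.mp hq0
  have hex : ∃ i, vq j * vp i ≠ vq i * vp j := by
    by_contra hc
    push_neg at hc
    have hpj : vp j ≠ 0 := by
      intro h0
      apply hp0
      funext i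
      have h1 := hc i
      rw [h0, mul_zero] at h1
      exact (mul_eq_zero.mp h1).resolve_left hj
    have hmk : Projectivization.mk K vp hp0 = Projectivization.mk K vq hq0 := by
      rw [Projectivization.mk_eq_mk_iff]
      refine ⟨Units.mk0 (vp j * (vq j)⁻¹) (by
        apply mul_ne_zero hpj (inv_ne_zero hj)), ?_⟩
      funext i
      show (vp j * (vq j)⁻¹) * vq i = vp i
      field_simp
      linear_combination (hc i).symm
    have hpq : p = q := by
      rw [← Projectivization.mk_rep p, ← Projectivization.mk_rep q]
      exact hmk
    exact hne hpq.symm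
  obtain ⟨i, hi⟩ := hex
  refine ⟨C (vq j) * X i - C (vq i) * X j, ?_, ?_, ?_⟩
  · exact (isHomogeneous_C_mul_X _ _).sub (isHomogeneous_C_mul_X _ _)
  · simp only [map_sub, map_mul, eval_C, eval_X]
    ring
  · simp only [map_sub, map_mul, eval_C, eval_X]
    exact sub_ne_zero_of_ne hi

lemma exists_nonvanishing (p : Projectivization K (Fin 3 → K)) :
    ∃ ℓ : MvPolynomial (Fin 3) K, ℓ.IsHomogeneous 1 ∧ eval p.rep ℓ ≠ 0 := by
  obtain ⟨j, hj⟩ : ∃ j, p.rep j ≠ 0 := Function.ne_iff.mp p.rep_nonzero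
  exact ⟨X j, isHomogeneous_X _ _, by simpa using hj⟩

def Phi (c m n : ℕ) (f₁ f₂ : MvPolynomial (Fin 3) K)
    (hf₁ : f₁.IsHomogeneous m) (hf₂ : f₂.IsHomogeneous n) :
    (↥(HS K (c+n)) × ↥(HS K (c+m))) →ₗ[K] ↥(HS K (c+m+n)) where
  toFun uv := ⟨uv.1.1 * f₁ + uv.2.1 * f₂,
    add_mem (memHS (((mem_homogeneousSubmodule _ _).mp uv.1.2).mul hf₁) (by omega))
      (memHS (((mem_homogeneousSubmodule _ _).mp uv.2.2).mul hf₂) (by omega))⟩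
  map_add' x y := Subtype.ext (by
    simp only [Submodule.coe_add, Prod.fst_add, Prod.snd_add]
    ring)
  map_smul' a x := Subtype.ext (by
    simp only [Prod.smul_fst, Prod.smul_snd, SetLike.val_smul, smul_eq_C_mul, RingHom.id_apply]
    ring)

def Psi (c m n : ℕ) (f₁ f₂ : MvPolynomial (Fin 3) K)
    (hf₁ : f₁.IsHomogeneous m) (hf₂ : f₂.IsHomogeneous n) :
    ↥(HS K c) →ₗ[K] (↥(HS K (c+n)) × ↥(HS K (c+m))) where
  toFun w := (⟨f₂ * w.1, memHS (hf₂.mul ((mem_homogeneousSubmodule _ _).mp w.2)) (by omega)⟩,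
    ⟨-(f₁ * w.1), neg_mem (memHS (hf₁.mul ((mem_homogeneousSubmodule _ _).mp w.2)) (by omega))⟩)
  map_add' x y := by
    refine Prod.ext (Subtype.ext ?_) (Subtype.ext ?_) <;>
      simp only [Submodule.coe_add, Prod.fst_add, Prod.snd_add] <;> ring
  map_smul' a x := by
    refine Prod.ext (Subtype.ext ?_) (Subtype.ext ?_) <;>
      simp only [SetLike.val_smul, smul_eq_C_mul, RingHom.id_apply, Prod.smul_fst,
        Prod.smul_snd] <;> ring

def Ev (t : ℕ) (T : Finset (Projectivization K (Fin 3 → K))) :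
    ↥(HS K t) →ₗ[K] (↥T → K) where
  toFun f p := eval (p : Projectivization K (Fin 3 → K)).rep f.1
  map_add' x y := by funext p; simp
  map_smul' a x := by funext p; simp [smul_eq_C_mul]

theorem weak_bezout {m n : ℕ} {f₁ f₂ : MvPolynomial (Fin 3) K}
    (hf₁ : f₁.IsHomogeneous m) (hf₂ : f₂.IsHomogeneous n)
    (h₁0 : f₁ ≠ 0) (h₂0 : f₂ ≠ 0) (hcop : IsRelPrime f₁ f₂)
    {S : Set (Projectivization K (Fin 3 → K))} (hS : S.Finite)
    (hz : ∀ p ∈ S, eval p.rep f₁ = 0 ∧ eval p.rep f₂ = 0) :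
    S.ncard ≤ m * n := by
  classical
  have hcard : S.ncard = hS.toFinset.card := Set.ncard_eq_toFinset_card S hS
  set T : Finset (Projectivization K (Fin 3 → K)) := hS.toFinset with hT
  set c := T.card with hc
  rw [hcard]
  set Φ := Phi (K := K) c m n f₁ f₂ hf₁ hf₂ with hΦ
  set Ψ := Psi (K := K) c m n f₁ f₂ hf₁ hf₂ with hΨ
  set E := Ev (K := K) (c+m+n) T with hE
  have hrange_ker : LinearMap.range Φ ≤ LinearMap.ker E := by
    rintro x ⟨⟨u, v⟩, rfl⟩
    rw [LinearMap.mem_ker]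
    funext p
    have hp : (p : Projectivization K (Fin 3 → K)) ∈ S := (hS.mem_toFinset).mp p.2
    obtain ⟨hz1, hz2⟩ := hz _ hp
    show eval (p : Projectivization K (Fin 3 → K)).rep (u.1 * f₁ + v.1 * f₂) = 0
    rw [map_add, map_mul, map_mul, hz1, hz2, mul_zero, mul_zero, add_zero]
  have hker_range : LinearMap.ker Φ ≤ LinearMap.range Ψ := by
    rintro ⟨⟨u, hu⟩, ⟨v, hv⟩⟩ hker
    have hker' : u * f₁ + v * f₂ = 0 := congrArg Subtype.val (LinearMap.mem_ker.mp hker)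
    by_cases hu0 : u = 0
    · have hv0 : v = 0 := by
        rw [hu0, zero_mul, zero_add] at hker'
        exact (mul_eq_zero.mp hker').resolve_right h₂0
      refine ⟨0, ?_⟩
      rw [map_zero]
      refine Prod.ext (Subtype.ext ?_) (Subtype.ext ?_)
      · exact hu0.symm
      · exact hv0.symm
    · have hdvd : f₂ ∣ f₁ * u := ⟨-v, by linear_combination hker'⟩
      have hdvd2 : f₂ ∣ u := (hcop.symm).dvd_of_dvd_mul_left hdvd
      obtain ⟨w, hw⟩ := hdvd2
      have huh : u.IsHomogeneous (n + c) := by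
        have h1 := (mem_homogeneousSubmodule _ _).mp hu
        exact (by omega : c + n = n + c) ▸ h1
      have hwhom : w.IsHomogeneous c := by
        apply isHom_of_mul_left hf₂ h₂0
        rw [← hw]
        exact huh
      have hveq : v = -(f₁ * w) := by
        have h2 : f₂ * (w * f₁ + v) = u * f₁ + v * f₂ := by rw [hw]; ring
        have h3 := (mul_eq_zero.mp (h2.trans hker')).resolve_left h₂0
        linear_combination h3
      refine ⟨⟨w, (mem_homogeneousSubmodule _ _).mpr hwhom⟩, ?_⟩
      refine Prod.ext (Subtype.ext ?_) (Subtype.ext ?_)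
      · exact hw.symm
      · show -(f₁ * w) = v
        exact hveq.symm
  have hsurj : LinearMap.range E = ⊤ := by
    have hdelta : ∀ p : ↥T, ∃ h : ↥(HS K (c+m+n)), E h p ≠ 0 ∧ ∀ q : ↥T, q ≠ p → E h q = 0 := by
      intro p
      obtain ⟨ℓ₀, hℓ₀hom, hℓ₀ne⟩ :=
        exists_nonvanishing (K := K) (p : Projectivization K (Fin 3 → K))
      set F : Projectivization K (Fin 3 → K) → MvPolynomial (Fin 3) K := fun q =>
        if h : q = (p : Projectivization K (Fin 3 → K)) then 1
        else Classical.choose (exists_sep (p : Projectivization K (Fin 3 → K)) q h) with hF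
      have hFhom : ∀ q ∈ T.erase (p : Projectivization K (Fin 3 → K)),
          (F q).IsHomogeneous 1 := by
        intro q hq
        have hne' : q ≠ (p : Projectivization K (Fin 3 → K)) := Finset.ne_of_mem_erase hq
        simp only [hF]
        rw [dif_neg hne']
        exact (Classical.choose_spec (exists_sep _ q hne')).1
      set H := ℓ₀ ^ (m + n + 1) * ∏ q ∈ T.erase (p : Projectivization K (Fin 3 → K)), F q with hH
      have hc1 : 1 ≤ c := Finset.card_pos.mpr ⟨(p : Projectivization K (Fin 3 → K)), p.2⟩
      have hcard' : (T.erase (p : Projectivization K (Fin 3 → K))).card = c - 1 :=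
        Finset.card_erase_of_mem p.2
      have hHhom : H.IsHomogeneous (c + m + n) := by
        have h1 : (ℓ₀ ^ (m+n+1)).IsHomogeneous (1 * (m+n+1)) := hℓ₀hom.pow _
        have h2 : (∏ q ∈ T.erase (p : Projectivization K (Fin 3 → K)), F q).IsHomogeneous
            (∑ _q ∈ T.erase (p : Projectivization K (Fin 3 → K)), 1) :=
          IsHomogeneous.prod _ _ _ hFhom
        have h3 := h1.mul h2
        have h4 : 1 * (m+n+1) + (∑ _q ∈ T.erase (p : Projectivization K (Fin 3 → K)), (1:ℕ))
            = c + m + n := by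
          rw [Finset.sum_const, smul_eq_mul, mul_one, hcard']
          omega
        exact h4 ▸ h3
      refine ⟨⟨H, (mem_homogeneousSubmodule _ _).mpr hHhom⟩, ?_, ?_⟩
      · show eval (p : Projectivization K (Fin 3 → K)).rep H ≠ 0
        rw [hH, map_mul, map_pow, map_prod]
        apply mul_ne_zero (pow_ne_zero _ hℓ₀ne)
        rw [Finset.prod_ne_zero_iff]
        intro q hq
        have hne' : q ≠ (p : Projectivization K (Fin 3 → K)) := Finset.ne_of_mem_erase hq
        simp only [hF]
        rw [dif_neg hne']
        exact (Classical.choose_spec (exists_sep _ q hne')).2.2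
      · intro q hqp
        show eval (q : Projectivization K (Fin 3 → K)).rep H = 0
        rw [hH, map_mul, map_prod]
        apply mul_eq_zero_of_right
        have hqmem : (q : Projectivization K (Fin 3 → K))
            ∈ T.erase (p : Projectivization K (Fin 3 → K)) :=
          Finset.mem_erase.mpr ⟨fun hcl => hqp (Subtype.ext hcl), q.2⟩
        apply Finset.prod_eq_zero hqmem
        have hne' : (q : Projectivization K (Fin 3 → K)) ≠ (p : Projectivization K (Fin 3 → K)) :=
          fun hcl => hqp (Subtype.ext hcl)
        simp only [hF]
        rw [dif_neg hne']
        exact (Classical.choose_spec (exists_sep _ _ hne')).2.1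
    rw [eq_top_iff]
    intro x _
    choose h hne hzero using hdelta
    have hx : x = ∑ p : ↥T, (x p / (E (h p) p)) • E (h p) := by
      funext q
      rw [Finset.sum_apply]
      rw [Finset.sum_eq_single q]
      · simp only [Pi.smul_apply, smul_eq_mul]
        exact (div_mul_cancel₀ (x q) (hne q)).symm
      · intro p _ hpq
        simp only [Pi.smul_apply, smul_eq_mul]
        rw [hzero p q (fun hcl => hpq hcl.symm), mul_zero]
      · intro hq; exact absurd (Finset.mem_univ q) hq
    rw [hx]
    apply Submodule.sum_mem
    intro p _
    exact Submodule.smul_mem _ _ (LinearMap.mem_range_self E (h p))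
  have e1 := LinearMap.finrank_range_add_finrank_ker E
  have e2 := LinearMap.finrank_range_add_finrank_ker Φ
  have i3 : Module.finrank K ↥(LinearMap.ker Φ) ≤ Module.finrank K ↥(HS K c) :=
    le_trans (Submodule.finrank_mono hker_range) (LinearMap.finrank_range_le Ψ)
  have i4 : Module.finrank K ↥(LinearMap.range Φ) ≤ Module.finrank K ↥(LinearMap.ker E) :=
    Submodule.finrank_mono hrange_ker
  have hrev : Module.finrank K ↥(LinearMap.range E) = c := by
    rw [hsurj, finrank_top, Module.finrank_fintype_fun_eq_card, Fintype.card_coe]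
  have hprod : Module.finrank K (↥(HS K (c+n)) × ↥(HS K (c+m)))
      = (c+n+2).choose 2 + (c+m+2).choose 2 := by
    rw [Module.finrank_prod, finrank_R, finrank_R]
  have hA : Module.finrank K ↥(HS K (c+m+n)) = (c+m+n+2).choose 2 := finrank_R _
  have hDc : Module.finrank K ↥(HS K c) = (c+2).choose 2 := finrank_R _
  have harith := choose_arith c m n
  omega




lemma finsupp3_ext {d d' : Fin 3 →₀ ℕ} (h0 : d 0 = d' 0) (h1 : d 1 = d' 1)
    (h2 : d 2 = d' 2) : d = d' := by
  ext i
  fin_cases i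
  · exact h0
  · exact h1
  · exact h2

lemma eval_aeval (F : Fin 3 → Polynomial K) (z : K) (φ : MvPolynomial (Fin 3) K) :
    Polynomial.eval z (MvPolynomial.aeval F φ) = eval (fun i => Polynomial.eval z (F i)) φ := by
  induction φ using MvPolynomial.induction_on with
  | C a => simp
  | add p q hp hq => simp [hp, hq]
  | mul_X p i hp => simp [hp]

lemma aeval_monomial_special (t : K) (d : Fin 3 →₀ ℕ) (a : K) :
    MvPolynomial.aeval (![Polynomial.C 1, Polynomial.C t, Polynomial.X] : Fin 3 → Polynomial K)
      (monomial d a)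
      = Polynomial.C (a * t ^ (d 1)) * Polynomial.X ^ (d 2) := by
  rw [aeval_monomial]
  rw [Finsupp.prod_fintype _ _ (fun i => pow_zero _)]
  rw [Fin.prod_univ_three]
  simp only [Matrix.cons_val_zero, Matrix.cons_val_one, Matrix.head_cons,
    Matrix.cons_val_two, Matrix.tail_cons, map_one, one_pow, one_mul]
  rw [← Polynomial.C_pow, Polynomial.algebraMap_eq, ← mul_assoc, ← Polynomial.C_mul]

lemma mk_eq_one_coord {v w : Fin 3 → K} (hv : v ≠ 0) (hw : w ≠ 0) (j : Fin 3)
    (hvj : v j = 1) (hwj : w j = 1)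
    (hmk : Projectivization.mk K v hv = Projectivization.mk K w hw) : v = w := by
  rw [Projectivization.mk_eq_mk_iff] at hmk
  obtain ⟨a, ha⟩ := hmk
  have haj : (a : K) * w j = v j := by
    have := congrFun ha j
    simpa [Units.smul_def] using this
  rw [hvj, hwj, mul_one] at haj
  funext i
  have := congrFun ha i
  simp only [Units.smul_def, Pi.smul_apply, smul_eq_mul] at this
  rw [haj, one_mul] at this
  exact this.symm

/-- the zero set (via some representative) of a nonconstant homogeneous polynomial over an
algebraically closed field is infinite in `ℙ²` -/
lemma infinite_zero_set [IsAlgClosed K] {h : MvPolynomial (Fin 3) K} {e : ℕ}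
    (hh : h.IsHomogeneous e) (h0 : h ≠ 0) (he : e ≠ 0) :
    {p : Projectivization K (Fin 3 → K) |
      ∃ (v : Fin 3 → K) (hv : v ≠ 0), Projectivization.mk K v hv = p ∧ eval v h = 0}.Infinite := by
  classical
  have huniq : ∀ d ∈ h.support, ∀ d' ∈ h.support, d 1 = d' 1 → d 2 = d' 2 → d = d' := by
    intro d hd d' hd' h1 h2
    have e1 := (isHom_iff h e).mp hh d hd
    have e2 := (isHom_iff h e).mp hh d' hd'
    rw [deg3] at e1 e2
    exact finsupp3_ext (by omega) h1 h2
  have hsne : h.support.Nonempty := support_nonempty.mpr h0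
  by_cases hx2 : ∃ d ∈ h.support, d 2 ≠ 0
  · -- case A: x₂ (third variable) occurs
    obtain ⟨d₀, hd₀, hd₀2⟩ := hx2
    set r : Polynomial K := ∑ d ∈ h.support,
      if d 2 = d₀ 2 then Polynomial.C (coeff d h) * Polynomial.X ^ (d 1) else 0 with hr
    have hrne : r ≠ 0 := by
      intro hr0
      have hco : r.coeff (d₀ 1) = coeff d₀ h := by
        rw [hr, Polynomial.finset_sum_coeff]
        rw [Finset.sum_eq_single d₀]
        · rw [if_pos rfl, Polynomial.coeff_C_mul, Polynomial.coeff_X_pow, if_pos rfl, mul_one]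
        · intro d hd hdne
          split
          · next hsp =>
            rw [Polynomial.coeff_C_mul, Polynomial.coeff_X_pow]
            rw [if_neg (fun hcl => hdne (huniq d hd d₀ hd₀ hcl.symm hsp)), mul_zero]
          · exact Polynomial.coeff_zero _
        · intro habs; exact absurd hd₀ habs
      rw [hr0, Polynomial.coeff_zero] at hco
      exact (mem_support_iff.mp hd₀) hco.symm
    have hfin' : {t : K | r.IsRoot t}.Finite := Polynomial.finite_setOf_isRoot hrne
    have hGinf : {t : K | ¬ r.IsRoot t}.Infinite := hfin'.infinite_compl
    haveI := hGinf.to_subtype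
    -- for each good t, find a zero point
    have hpt : ∀ t : K, ¬ r.IsRoot t → ∃ z : K, eval ![1, t, z] h = 0 := by
      intro t ht
      set q : Polynomial K := MvPolynomial.aeval
        (![Polynomial.C 1, Polynomial.C t, Polynomial.X] : Fin 3 → Polynomial K) h with hq
      have hqc : q.coeff (d₀ 2) = r.eval t := by
        rw [hq]
        conv_lhs => rw [h.as_sum]
        rw [map_sum, Polynomial.finset_sum_coeff, hr, Polynomial.eval_finset_sum]
        apply Finset.sum_congr rfl
        intro d hd
        rw [aeval_monomial_special, Polynomial.coeff_C_mul, Polynomial.coeff_X_pow]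
        split
        · next hsp =>
          rw [if_pos hsp.symm, Polynomial.eval_mul, Polynomial.eval_C, Polynomial.eval_pow,
            Polynomial.eval_X, mul_one]
        · next hsp =>
          rw [if_neg (fun hcl => hsp (hcl.symm)), Polynomial.eval_zero, mul_zero]
      have hqdeg : q.degree ≠ 0 := by
        have hcne : q.coeff (d₀ 2) ≠ 0 := by rw [hqc]; exact ht
        have hle := Polynomial.le_degree_of_ne_zero hcne
        intro hdeg0
        rw [hdeg0] at hle
        have : d₀ 2 ≤ 0 := by exact_mod_cast hle
        omega
      obtain ⟨z, hz⟩ := IsAlgClosed.exists_root q hqdeg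
      refine ⟨z, ?_⟩
      have := eval_aeval (![Polynomial.C 1, Polynomial.C t, Polynomial.X]) z h
      rw [← hq] at this
      rw [Polynomial.IsRoot] at hz
      rw [hz] at this
      have hfun : (fun i => Polynomial.eval z
          ((![Polynomial.C 1, Polynomial.C t, Polynomial.X] : Fin 3 → Polynomial K) i))
          = ![1, t, z] := by
        funext i
        fin_cases i <;> simp
      rw [hfun] at this
      exact this.symm
    choose z hz using fun t : {t : K | ¬ r.IsRoot t} => hpt t.1 t.2
    have hvne : ∀ (t zz : K), (![1, t, zz] : Fin 3 → K) ≠ 0 := by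
      intro t zz hcl
      have := congrFun hcl 0
      simp at this
    apply Set.infinite_of_injective_forall_mem
      (f := fun t : {t : K | ¬ r.IsRoot t} =>
        Projectivization.mk K ![1, t.1, z t] (hvne t.1 (z t)))
    · intro t t' hmk
      have := mk_eq_one_coord (hvne t.1 (z t)) (hvne t'.1 (z t')) 0 (by simp) (by simp) hmk
      have ht := congrFun this 1
      simp only [Matrix.cons_val_one, Matrix.head_cons] at ht
      exact Subtype.ext ht
    · intro t
      exact ⟨![1, t.1, z t], hvne t.1 (z t), rfl, hz t⟩
  · -- case B: no monomial involves the third variable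
    push_neg at hx2
    set s : Polynomial K := ∑ d ∈ h.support, Polynomial.C (coeff d h) * Polynomial.X ^ (d 1)
      with hs
    have hcos : ∀ d ∈ h.support, s.coeff (d 1) = coeff d h := by
      intro d hd
      rw [hs, Polynomial.finset_sum_coeff]
      rw [Finset.sum_eq_single d]
      · rw [Polynomial.coeff_C_mul, Polynomial.coeff_X_pow, if_pos rfl, mul_one]
      · intro d' hd' hdne
        rw [Polynomial.coeff_C_mul, Polynomial.coeff_X_pow]
        rw [if_neg (fun hcl => hdne (huniq d' hd' d hd hcl.symm ((hx2 d' hd').trans (hx2 d hd).symm))), mul_zero]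
      · intro habs; exact absurd hd habs
    have hsne2 : s ≠ 0 := by
      obtain ⟨d, hd⟩ := hsne
      intro h0s
      have := hcos d hd
      rw [h0s, Polynomial.coeff_zero] at this
      exact (mem_support_iff.mp hd) this.symm
    have heval : ∀ a b zz : K, eval ![a, b, zz] h
        = ∑ d ∈ h.support, coeff d h * a ^ (d 0) * b ^ (d 1) := by
      intro a b zz
      rw [eval_eq']
      apply Finset.sum_congr rfl
      intro d hd
      rw [Fin.prod_univ_three]
      simp only [Matrix.cons_val_zero, Matrix.cons_val_one, Matrix.head_cons,
        Matrix.cons_val_two, Matrix.tail_cons]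
      rw [hx2 d hd, pow_zero, mul_one, mul_assoc]
    by_cases hnd : s.natDegree = 0
    · -- h = c * x₀^e ; zeros: [0:1:t]
      have hd1 : ∀ d ∈ h.support, d 1 = 0 := by
        intro d hd
        have hle := Polynomial.le_natDegree_of_ne_zero (by rw [hcos d hd]; exact mem_support_iff.mp hd)
        omega
      have hd0 : ∀ d ∈ h.support, d 0 ≠ 0 := by
        intro d hd
        have := (isHom_iff h e).mp hh d hd
        rw [deg3] at this
        have h1 := hd1 d hd
        have h2 := hx2 d hd
        omega
      have hvne : ∀ t : K, (![0, 1, t] : Fin 3 → K) ≠ 0 := by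
        intro t hcl
        have := congrFun hcl 1
        simp at this
      apply Set.infinite_of_injective_forall_mem
        (f := fun t : K => Projectivization.mk K ![0, 1, t] (hvne t))
      · intro t t' hmk
        have := mk_eq_one_coord (hvne t) (hvne t') 1 (by simp) (by simp) hmk
        have ht := congrFun this 2
        simpa using ht
      · intro t
        refine ⟨![0, 1, t], hvne t, rfl, ?_⟩
        rw [heval]
        apply Finset.sum_eq_zero
        intro d hd
        rw [zero_pow (hd0 d hd), mul_zero, zero_mul]
    · -- s has a root τ; zeros: [1:τ:t]
      have hsdeg : s.degree ≠ 0 := by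
        rw [Polynomial.degree_eq_natDegree hsne2]
        exact_mod_cast hnd
      obtain ⟨τ, hτ⟩ := IsAlgClosed.exists_root s hsdeg
      have hvne : ∀ t : K, (![1, τ, t] : Fin 3 → K) ≠ 0 := by
        intro t hcl
        have := congrFun hcl 0
        simp at this
      have hzero : ∀ t : K, eval ![1, τ, t] h = 0 := by
        intro t
        rw [heval]
        have : ∑ d ∈ h.support, coeff d h * 1 ^ (d 0) * τ ^ (d 1) = s.eval τ := by
          rw [hs, Polynomial.eval_finset_sum]
          apply Finset.sum_congr rfl
          intro d _
          rw [Polynomial.eval_mul, Polynomial.eval_C, Polynomial.eval_pow, Polynomial.eval_X,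
            one_pow, mul_one]
        rw [this]
        exact hτ
      apply Set.infinite_of_injective_forall_mem
        (f := fun t : K => Projectivization.mk K ![1, τ, t] (hvne t))
      · intro t t' hmk
        have := mk_eq_one_coord (hvne t) (hvne t') 0 (by simp) (by simp) hmk
        have ht := congrFun this 2
        simpa using ht
      · intro t
        exact ⟨![1, τ, t], hvne t, rfl, hzero t⟩


lemma dvd_of_dvd_C_mul {π x : MvPolynomial (Fin 3) K} {c : K} (hc : c ≠ 0)
    (h : π ∣ C c * x) : π ∣ x := by
  obtain ⟨u, hu⟩ := h
  refine ⟨C c⁻¹ * u, ?_⟩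
  calc x = C c⁻¹ * (C c * x) := by
        rw [← mul_assoc, ← map_mul, inv_mul_cancel₀ hc, map_one, one_mul]
    _ = C c⁻¹ * (π * u) := by rw [hu]
    _ = π * (C c⁻¹ * u) := by ring

end CritProof

open CritProof

/-- Let `K` be algebraically closed of characteristic 2 and `g ∈ K[x₁,x₂,x₃]` homogeneous of
even degree `d = 2k`, `k ≥ 1`.  If the critical set `𝒞_g ⊆ ℙ²_K` is finite, then
`|𝒞_g| ≤ (d - 1)²`. -/
theorem even_degree_critical_set_card_le
    {K : Type*} [Field K] [IsAlgClosed K] [CharP K 2]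
    (k : ℕ) (hk : 1 ≤ k)
    (g : MvPolynomial (Fin 3) K) (hghom : g.IsHomogeneous (2 * k))
    (hfin : (critLocus g).Finite) :
    (critLocus g).ncard ≤ (2 * k - 1) ^ 2 := by
  classical
  set gd : Fin 3 → MvPolynomial (Fin 3) K := fun i => pderiv i g with hgd
  have hgdhom : ∀ i, (gd i).IsHomogeneous (2 * k - 1) := fun i => isHom_pderiv hghom i
  by_cases hall : ∀ i, gd i = 0
  · -- critical locus is everything, contradicting finiteness
    have huniv : critLocus g = Set.univ := by
      apply Set.eq_univ_of_forall
      intro p v hv hmk i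
      have : pderiv i g = 0 := hall i
      rw [this, map_zero]
    have hvne : ∀ t : K, (![1, t, 0] : Fin 3 → K) ≠ 0 := by
      intro t hcl
      have := congrFun hcl 0
      simp at this
    haveI : Infinite (Projectivization K (Fin 3 → K)) := by
      apply Infinite.of_injective (fun t : K => Projectivization.mk K ![1, t, 0] (hvne t))
      intro t t' hmk
      have := mk_eq_one_coord (hvne t) (hvne t') 0 (by simp) (by simp) hmk
      have ht := congrFun this 1
      simpa using ht
    rw [huniv] at hfin
    exact absurd hfin Set.infinite_univ
  · push_neg at hall
    obtain ⟨i₀, hi₀⟩ := hall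
    -- no prime divides all three partials
    have hnocommon : ∀ π : MvPolynomial (Fin 3) K, Prime π → ¬ (∀ i, π ∣ gd i) := by
      intro π hπ hdvdall
      have hπhom : π.IsHomogeneous π.totalDegree :=
        isHom_of_dvd (hgdhom i₀) hi₀ (hdvdall i₀)
      have hπdeg : π.totalDegree ≠ 0 := by
        intro h0
        have hC := eq_C_of_totalDegree_zero h0
        have hc0 : coeff 0 π ≠ 0 := by
          intro hc
          rw [hc, map_zero] at hC
          exact hπ.ne_zero hC
        exact hπ.not_unit (hC ▸ (IsUnit.map (C : K →+* MvPolynomial (Fin 3) K)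
          (isUnit_iff_ne_zero.mpr hc0)))
      have hZinf := infinite_zero_set hπhom hπ.ne_zero hπdeg
      have hsub : {p : Projectivization K (Fin 3 → K) |
          ∃ (v : Fin 3 → K) (hv : v ≠ 0), Projectivization.mk K v hv = p ∧ eval v π = 0}
          ⊆ critLocus g := by
        rintro p ⟨v, hv, hmkv, hev⟩
        intro w hw hmkw i
        have hmm : Projectivization.mk K w hw = Projectivization.mk K v hv := by
          rw [hmkv, hmkw]
        rw [Projectivization.mk_eq_mk_iff] at hmm
        obtain ⟨a, ha⟩ := hmm
        have hgiv : eval v (gd i) = 0 := by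
          obtain ⟨ρ, hρ⟩ := hdvdall i
          rw [hρ, map_mul, hev, zero_mul]
        have hwav : w = (a : K) • v := by
          funext j
          have := congrFun ha j
          simpa [Units.smul_def] using this.symm
        show eval w (pderiv i g) = 0
        rw [hwav, eval_smul_of_isHom (hgdhom i), hgiv, mul_zero]
      exact (hZinf.mono hsub) hfin
    -- the pencil
    set f : K → MvPolynomial (Fin 3) K :=
      fun t => gd 0 + C t * gd 1 + C (t * t) * gd 2 with hf
    have hfhom : ∀ t, (f t).IsHomogeneous (2 * k - 1) := by
      intro t
      exact (((hgdhom 0).add ((hgdhom 1).C_mul t)).add ((hgdhom 2).C_mul (t*t)))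
    have vand : ∀ (π : MvPolynomial (Fin 3) K) (a b c' : K), a ≠ b → a ≠ c' → b ≠ c' →
        π ∣ f a → π ∣ f b → π ∣ f c' → ∀ i, π ∣ gd i := by
      intro π a b c' hab hac hbc ha hb hc
      have d12 : π ∣ C (a - b) * (gd 1 + C (a + b) * gd 2) := by
        have hid : C (a - b) * (gd 1 + C (a + b) * gd 2) = f a - f b := by
          simp only [hf, map_sub, map_add, map_mul]
          ring
        exact hid ▸ dvd_sub ha hb
      have h12 := dvd_of_dvd_C_mul (sub_ne_zero_of_ne hab) d12
      have d13 : π ∣ C (a - c') * (gd 1 + C (a + c') * gd 2) := by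
        have hid : C (a - c') * (gd 1 + C (a + c') * gd 2) = f a - f c' := by
          simp only [hf, map_sub, map_add, map_mul]
          ring
        exact hid ▸ dvd_sub ha hc
      have h13 := dvd_of_dvd_C_mul (sub_ne_zero_of_ne hac) d13
      have d23 : π ∣ C (b - c') * gd 2 := by
        have hid : C (b - c') * gd 2
            = (gd 1 + C (a + b) * gd 2) - (gd 1 + C (a + c') * gd 2) := by
          simp only [map_sub, map_add]
          ring
        exact hid ▸ dvd_sub h12 h13
      have hg2 : π ∣ gd 2 := dvd_of_dvd_C_mul (sub_ne_zero_of_ne hbc) d23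
      have hg1 : π ∣ gd 1 := by
        have hid : gd 1 = (gd 1 + C (a + b) * gd 2) - C (a + b) * gd 2 := by ring
        exact hid ▸ dvd_sub h12 (hg2.mul_left _)
      have hg0 : π ∣ gd 0 := by
        have hid : gd 0 = f a - C a * gd 1 - C (a * a) * gd 2 := by
          simp only [hf]; ring
        exact hid ▸ dvd_sub (dvd_sub ha (hg1.mul_left _)) (hg2.mul_left _)
      intro i
      fin_cases i
      · exact hg0
      · exact hg1
      · exact hg2
    -- the zero set of the pencil is finite
    have hzfin : {t : K | f t = 0}.Finite := by
      by_contra hinf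
      obtain ⟨F3, hsub3, hcard3⟩ := (Set.Infinite.exists_subset_card_eq hinf) 3
      obtain ⟨a, b, c', hab, hac, hbc, hF3⟩ := Finset.card_eq_three.mp hcard3
      have hmem : ∀ x ∈ F3, f x = 0 := fun x hx => hsub3 hx
      have h3 := vand 0 a b c' hab hac hbc
        (zero_dvd_iff.mpr (hmem a (by rw [hF3]; simp)))
        (zero_dvd_iff.mpr (hmem b (by rw [hF3]; simp)))
        (zero_dvd_iff.mpr (hmem c' (by rw [hF3]; simp)))
      exact hi₀ (zero_dvd_iff.mp (h3 i₀))
    -- pick t₁ with f t₁ ≠ 0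
    obtain ⟨t₁, ht₁⟩ := hzfin.infinite_compl.nonempty
    have hft₁ : f t₁ ≠ 0 := ht₁
    -- prime factors of f t₁
    obtain ⟨ps, hpsprime, hpsassoc⟩ :=
      UniqueFactorizationMonoid.exists_prime_factors (f t₁) hft₁
    -- bad parameters
    have hqfin : ∀ q ∈ ps.toFinset, {t : K | q ∣ f t}.Finite := by
      intro q hq
      have hqprime : Prime q := hpsprime q (Multiset.mem_toFinset.mp hq)
      by_contra hinf
      obtain ⟨F3, hsub3, hcard3⟩ := (Set.Infinite.exists_subset_card_eq hinf) 3
      obtain ⟨a, b, c', hab, hac, hbc, hF3⟩ := Finset.card_eq_three.mp hcard3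
      have hmem : ∀ x ∈ F3, q ∣ f x := fun x hx => hsub3 hx
      have h3 := vand q a b c' hab hac hbc
        (hmem a (by rw [hF3]; simp)) (hmem b (by rw [hF3]; simp))
        (hmem c' (by rw [hF3]; simp))
      exact hnocommon q hqprime h3
    have hBfin : (⋃ q ∈ ps.toFinset, {t : K | q ∣ f t}).Finite :=
      Set.Finite.biUnion ps.toFinset.finite_toSet hqfin
    -- pick t₂ outside everything bad
    obtain ⟨t₂, ht₂⟩ :=
      (((hBfin.union hzfin).union (Set.finite_singleton t₁)).infinite_compl).nonempty
    simp only [Set.mem_compl_iff, Set.mem_union, Set.mem_singleton_iff, not_or] at ht₂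
    obtain ⟨⟨ht₂B, ht₂z⟩, ht₂t₁⟩ := ht₂
    have hft₂ : f t₂ ≠ 0 := ht₂z
    -- coprimality
    have hcop : IsRelPrime (f t₁) (f t₂) := by
      intro d hd1 hd2
      by_contra hdu
      have hdne : d ≠ 0 := by
        intro h0
        rw [h0] at hd1
        exact hft₁ (zero_dvd_iff.mp hd1)
      obtain ⟨π, hπirr, hπd⟩ := WfDvdMonoid.exists_irreducible_factor hdu hdne
      have hπ : Prime π := UniqueFactorizationMonoid.irreducible_iff_prime.mp hπirr
      have hπ1 : π ∣ f t₁ := hπd.trans hd1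
      have hπ2 : π ∣ f t₂ := hπd.trans hd2
      have hπprod : π ∣ ps.prod := hπ1.trans hpsassoc.symm.dvd
      obtain ⟨q, hqmem, hπq⟩ := hπ.exists_mem_multiset_dvd hπprod
      have hqprime : Prime q := hpsprime q hqmem
      have hassoc : Associated π q := hπ.associated_of_dvd hqprime hπq
      have hq2 : q ∣ f t₂ := hassoc.symm.dvd.trans hπ2
      apply ht₂B
      exact Set.mem_biUnion (Multiset.mem_toFinset.mpr hqmem) hq2
    -- critical locus is contained in the common zeros
    have hzeros : ∀ p ∈ critLocus g, eval p.rep (f t₁) = 0 ∧ eval p.rep (f t₂) = 0 := by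
      intro p hp
      have hall0 : ∀ i, eval p.rep (gd i) = 0 :=
        hp p.rep p.rep_nonzero (Projectivization.mk_rep p)
      constructor <;>
      · simp only [hf, map_add, map_mul, eval_C]
        rw [hall0 0, hall0 1, hall0 2]
        ring
    have hbez := weak_bezout (hfhom t₁) (hfhom t₂) hft₁ hft₂ hcop hfin hzeros
    calc (critLocus g).ncard ≤ (2 * k - 1) * (2 * k - 1) := hbez
      _ = (2 * k - 1) ^ 2 := (sq (2 * k - 1)).symm


end
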